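/- arXiv:1509.06424 — 8 statements merged into one kernel-verified Lean document; each statement's English description precedes it below -/
import Mathlib

section
/- Let C be a small category, Y a simplicial set, and δ a twisted structure on C with coefficients in Y. Then the twisted face maps d_i^δ on the graded collection {Y_n × N(C)_n} satisfy the Δ-identity: for all n ≥ 2 and all 0 ≤ j ≤ i ≤ n−1, d_i^δ ∘ d_j^δ = d_j^δ ∘ d_{i+1}^δ as maps Y_n × N(C)_n → Y_{n−2} × N(C)_{n−2}. -/
open CategoryTheory Simplicial

universe u

/-- The `i`-th vertex of an `n`-simplex of the nerve of a small category `C`. -/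
def nerveVertex {C : Type u} [SmallCategory C] {n : ℕ}
    (σ : nerve C _⦋n⦌) (i : Fin (n + 1)) : C :=
  σ.obj i

/-- The twisted face map `d_i^δ : Y_{n+1} × N(C)_{n+1} → Y_n × N(C)_n`,
`d_i^δ(y, σ) = (δ_{v_i}(d_i y), d_i σ)` where `v_i` is the `i`-th vertex of `σ`. -/
def twistedFace {C : Type u} [SmallCategory C] (Y : SSet.{u})
    (δ : C → (Y ⟶ Y)) {n : ℕ} (i : Fin (n + 2)) :
    Y _⦋n + 1⦌ × nerve C _⦋n + 1⦌ → Y _⦋n⦌ × nerve C _⦋n⦌ :=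
  fun p => ((δ (nerveVertex p.2 i)).app (Opposite.op (SimplexCategory.mk n)) (Y.δ i p.1),
    (nerve C).δ i p.2)

/-!
Each `δ_v` is a simplicial map, so it commutes with faces, and both composites send `(y, σ)` to
two twists applied to an iterated face of `y`. The two twisting vertices are `v_j ≤ v_{i+1}` of
`σ`, joined by a morphism of `C`, so the twists commute; the simplicial identity
`d_i d_j = d_j d_{i+1}` in `Y` and in `N(C)` does the rest.
-/

section TwistedFace

variable {C : Type u} [SmallCategory C] (Y : SSet.{u}) (δ : C → (Y ⟶ Y))

theorem twistedFace_twistedFace {n : ℕ} (i : Fin (n + 2)) (k : Fin (n + 3))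
    (p : Y _⦋n + 2⦌ × nerve C _⦋n + 2⦌) :
    twistedFace Y δ i (twistedFace Y δ k p) =
      ((δ (p.2.obj k) ≫ δ (p.2.obj (k.succAbove i))).app _ (Y.δ i (Y.δ k p.1)),
        (nerve C).δ i ((nerve C).δ k p.2)) := by
  simp only [twistedFace, nerveVertex, SSet.δ_naturality_apply]
  rfl

variable {Y δ}

theorem twist_comm_of_le (hcomm : ∀ v w : C, Nonempty (v ⟶ w) → δ v ≫ δ w = δ w ≫ δ v)
    {m : ℕ} (σ : nerve C _⦋m⦌) {a b : Fin (m + 1)} (hab : a ≤ b) :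
    δ (σ.obj a) ≫ δ (σ.obj b) = δ (σ.obj b) ≫ δ (σ.obj a) :=
  hcomm _ _ ⟨σ.map (homOfLE hab)⟩

end TwistedFace

/-- for a twisted structure `δ` on a small category `C` with coefficients in a
simplicial set `Y`, the twisted face maps on `{Y_n × N(C)_n}` satisfy the Δ-identity
`d_i^δ ∘ d_j^δ = d_j^δ ∘ d_{i+1}^δ` for `0 ≤ j ≤ i ≤ n − 1` (maps out of level `n ≥ 2`;
here the ambient level is `n + 2` and `i, j : Fin (n + 2)` range over `0, …, n + 1`). -/
theorem twistedFace_delta_identity {C : Type u} [SmallCategory C] (Y : SSet.{u})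
    (δ : C → (Y ⟶ Y))
    (hcomm : ∀ v w : C, (Nonempty (v ⟶ w) ∨ Nonempty (w ⟶ v)) →
      δ v ≫ δ w = δ w ≫ δ v)
    {n : ℕ} (i j : Fin (n + 2)) (hij : j ≤ i) :
    (twistedFace Y δ i) ∘ (twistedFace Y δ j.castSucc) =
      (twistedFace Y δ j) ∘ (twistedFace Y δ i.succ) := by
  funext ⟨y, σ⟩
  have hj : j.castSucc.succAbove i = i.succ :=
    Fin.succAbove_of_le_castSucc _ _ (Fin.castSucc_le_castSucc_iff.mpr hij)
  have hi : i.succ.succAbove j = j.castSucc :=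
    Fin.succAbove_of_castSucc_lt _ _ (Fin.castSucc_lt_succ_iff.mpr hij)
  simp only [Function.comp_apply, twistedFace_twistedFace, hi, hj,
    twist_comm_of_le (fun v w h ↦ hcomm v w (Or.inl h)) σ
      (Fin.castSucc_lt_succ_iff.mpr hij).le,
    SSet.δ_comp_δ_apply hij]
end

section
/- Let G be a simplicial group, C a small category, and δ a twisted structure on C with coefficients in G. Then the twisted face homomorphisms d_i^δ : F^G[C]_n → F^G[C]_{n−1} satisfy the Δ-identity: for all n ≥ 2 and all 0 ≤ j ≤ i ≤ n−1, d_i^δ ∘ d_j^δ = d_j^δ ∘ d_{i+1}^δ as group homomorphisms F^G[C]_n → F^G[C]_{n−2}. Hence F^{G,Δ}_δ[C] = {F^G[C]_n} is a Δ-group (a sequence of groups with face homomorphisms satisfying d_i d_j = d_j d_{i+1} for i ≥ j). -/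
open CategoryTheory Simplicial

universe u

namespace TwistedSG

variable (C : Type u) [SmallCategory C] (G : SimplicialObject GrpCat.{u}) (a₀ : C)

/-- The group of `n`-simplices of the simplicial group `G`. -/
abbrev Gn (n : ℕ) : Type u := ↥(G.obj (Opposite.op (SimplexCategory.mk n)))

/-- The face map of the nerve of `C` (whose `n`-simplices are `ComposableArrows C n`). -/
def nerveFace {n : ℕ} (i : Fin (n + 2)) (x : ComposableArrows C (n + 1)) :
    ComposableArrows C n :=
  (nerve C).δ i x

/-- The totally degenerate `n`-simplex `a₀ⁿ` of the nerve at the base object `a₀`. -/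
def basept (n : ℕ) : ComposableArrows C n :=
  (CategoryTheory.Functor.const (Fin (n + 1))).obj a₀

/-- The free product of copies of `G_n` indexed by the `n`-simplices of the nerve. -/
abbrev FreeProd (n : ℕ) : Type u :=
  Monoid.CoprodI (fun _ : ComposableArrows C n => Gn G n)

/-- The inclusion of the copy of `G_n` labelled by the simplex `x`. -/
def incl {n : ℕ} (x : ComposableArrows C n) : Gn G n →* FreeProd C G n :=
  Monoid.CoprodI.of (M := fun _ : ComposableArrows C n => Gn G n) (i := x)

/-- `F^G[C]_n`: the quotient of the free product of the copies `(G_n)_x`, `x ∈ N(C)_n`,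
by the normal closure of the copy indexed by the basepoint simplex `a₀ⁿ`. -/
abbrev FG (n : ℕ) : Type u :=
  FreeProd C G n ⧸ Subgroup.normalClosure (Set.range (incl C G (basept C a₀ n)))

/-- The twisted face homomorphism on the free product, with values in the quotient:
`g_x ↦ (δ_{v_i}(d_i g))_{d_i x}`. -/
noncomputable def dFaceAux (δ : C → (G ⟶ G)) {n : ℕ} (i : Fin (n + 2)) :
    FreeProd C G (n + 1) →* FG C G a₀ n :=
  Monoid.CoprodI.lift fun x =>
    ((QuotientGroup.mk' _).comp (incl C G (nerveFace C i x))).comp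
      ((((δ (x.obj i)).app (Opposite.op (SimplexCategory.mk n))).hom :
          Gn G n →* Gn G n).comp
        ((G.δ i).hom : Gn G (n + 1) →* Gn G n))

lemma nerveFace_basept {n : ℕ} (i : Fin (n + 2)) :
    nerveFace C i (basept C a₀ (n + 1)) = basept C a₀ n := rfl

/-- The twisted face homomorphism `d_i^δ : F^G[C]_{n+1} → F^G[C]_n`, determined by
`d_i^δ(g_x) = (δ_{v_i}(d_i g))_{d_i x}`. -/
noncomputable def dFace (δ : C → (G ⟶ G)) {n : ℕ} (i : Fin (n + 2)) :
    FG C G a₀ (n + 1) →* FG C G a₀ n :=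
  QuotientGroup.lift _ (dFaceAux C G a₀ δ i) (by
    have hsub : Set.range (incl C G (basept C a₀ (n + 1))) ⊆
        ↑(dFaceAux C G a₀ δ i).ker := by
      rintro _ ⟨g, rfl⟩
      have : dFaceAux C G a₀ δ i (incl C G (basept C a₀ (n + 1)) g) =
          (QuotientGroup.mk' _) (incl C G (basept C a₀ n)
            ((((δ ((basept C a₀ (n+1)).obj i)).app (Opposite.op (SimplexCategory.mk n))))
              (((G.δ i).hom : Gn G (n + 1) →* Gn G n) g))) := by
        simp only [dFaceAux, incl, Monoid.CoprodI.lift_of]; rfl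
      rw [SetLike.mem_coe, MonoidHom.mem_ker, this, QuotientGroup.mk'_apply,
        QuotientGroup.eq_one_iff]
      exact Subgroup.subset_normalClosure ⟨_, rfl⟩
    exact fun y hy => MonoidHom.mem_ker.mp (Subgroup.normalClosure_le_normal hsub hy))

/-!
Both composites send a generator `g_x` to the copy indexed by the same double face of `x`
(a simplicial identity of the nerve). The coefficients agree because the `δ_v` are simplicial
maps, `d_i d_j = d_j d_{i+1}` holds in `G`, and the two twists involved, `δ_{x_j}` and
`δ_{x_{i+1}}`, commute: `x` itself provides a morphism `x_j ⟶ x_{i+1}`.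
-/

section

variable {D : Type*} [Category D] (X : SimplicialObject D)

/-- The coefficient part `g ↦ δ_v(d_i g)` of the twisted face `d_i^δ`, for `φ = δ_v`. -/
def twistedδ (φ : X ⟶ X) {n : ℕ} (i : Fin (n + 2)) : X _⦋n + 1⦌ ⟶ X _⦋n⦌ :=
  X.δ i ≫ φ.app _

lemma twistedδ_comp_twistedδ {φ ψ : X ⟶ X} (hφψ : φ ≫ ψ = ψ ≫ φ) {n : ℕ}
    {i j : Fin (n + 2)} (hij : j ≤ i) :
    twistedδ X φ j.castSucc ≫ twistedδ X ψ i = twistedδ X ψ i.succ ≫ twistedδ X φ j := by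
  calc twistedδ X φ j.castSucc ≫ twistedδ X ψ i
      = X.δ j.castSucc ≫ X.δ i ≫ (φ ≫ ψ).app _ := by
        simp only [twistedδ, SimplicialObject.δ_naturality_assoc, NatTrans.comp_app, Category.assoc]
    _ = X.δ i.succ ≫ X.δ j ≫ (ψ ≫ φ).app _ := by
        rw [hφψ, ← Category.assoc, ← SimplicialObject.δ_comp_δ X hij, Category.assoc]
    _ = twistedδ X ψ i.succ ≫ twistedδ X φ j := by
        simp only [twistedδ, SimplicialObject.δ_naturality_assoc, NatTrans.comp_app, Category.assoc]

end

lemma nerveFace_nerveFace {n : ℕ} {i j : Fin (n + 2)} (hij : j ≤ i)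
    (x : ComposableArrows C (n + 2)) :
    nerveFace C i (nerveFace C j.castSucc x) = nerveFace C j (nerveFace C i.succ x) :=
  (ConcreteCategory.congr_hom (SimplicialObject.δ_comp_δ (nerve C) hij) x).symm

lemma nerveFace_castSucc_obj {n : ℕ} {i j : Fin (n + 2)} (hij : j ≤ i)
    (x : ComposableArrows C (n + 2)) : (nerveFace C j.castSucc x).obj i = x.obj i.succ :=
  congrArg x.obj (Fin.succAbove_of_le_castSucc _ _ (Fin.castSucc_le_castSucc_iff.mpr hij))

lemma nerveFace_succ_obj {n : ℕ} {i j : Fin (n + 2)} (hij : j ≤ i)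
    (x : ComposableArrows C (n + 2)) : (nerveFace C i.succ x).obj j = x.obj j.castSucc :=
  congrArg x.obj (Fin.succAbove_of_castSucc_lt _ _ (Fin.castSucc_lt_succ_iff.mpr hij))

lemma FG.hom_ext {M : Type*} [Monoid M] {n : ℕ} {f f' : FG C G a₀ n →* M}
    (h : ∀ (x : ComposableArrows C n) (g : Gn G n),
      f (QuotientGroup.mk (incl C G x g)) = f' (QuotientGroup.mk (incl C G x g))) :
    f = f' :=
  QuotientGroup.monoidHom_ext _ (Monoid.CoprodI.ext_hom _ _ fun x => MonoidHom.ext (h x))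

lemma dFace_mk_incl (δ : C → (G ⟶ G)) {n : ℕ} (i : Fin (n + 2))
    (x : ComposableArrows C (n + 1)) (g : Gn G (n + 1)) :
    dFace C G a₀ δ i (QuotientGroup.mk (incl C G x g)) =
      QuotientGroup.mk (incl C G (nerveFace C i x) ((twistedδ G (δ (x.obj i)) i).hom g)) :=
  rfl

end TwistedSG

/-- for a twisted structure `δ` on a small category `C` with coefficients in a
simplicial group `G`, the twisted face homomorphisms `d_i^δ : F^G[C]_n → F^G[C]_{n−1}`
satisfy the Δ-identity `d_i^δ ∘ d_j^δ = d_j^δ ∘ d_{i+1}^δ` for `0 ≤ j ≤ i ≤ n − 1`; hence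
`{F^G[C]_n}` is a Δ-group. -/
theorem TwistedSG.dFace_delta_identity {C : Type u} [SmallCategory C]
    (G : SimplicialObject GrpCat.{u}) (a₀ : C) (δ : C → (G ⟶ G))
    (hcomm : ∀ v w : C, (Nonempty (v ⟶ w) ∨ Nonempty (w ⟶ v)) →
      δ v ≫ δ w = δ w ≫ δ v)
    {n : ℕ} (i j : Fin (n + 2)) (hij : j ≤ i) :
    (dFace C G a₀ δ i).comp (dFace C G a₀ δ j.castSucc) =
      (dFace C G a₀ δ j).comp (dFace C G a₀ δ i.succ) := by
  refine FG.hom_ext C G a₀ fun x g => ?_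
  have hvertices : x.obj j.castSucc ⟶ x.obj i.succ :=
    x.map (homOfLE (Fin.castSucc_lt_succ_iff.mpr hij).le)
  have htwisted := twistedδ_comp_twistedδ G (hcomm _ _ (.inl ⟨hvertices⟩)) hij
  simp only [MonoidHom.comp_apply, dFace_mk_incl, nerveFace_nerveFace C hij,
    nerveFace_castSucc_obj C hij, nerveFace_succ_obj C hij]
  rw [← GrpCat.comp_apply, ← GrpCat.comp_apply, htwisted]
end

section
/- Let C be a small category, Y a simplicial set, and δ a twisted structure on C with coefficients in Y. Define, for each n ≥ 1, the homomorphism of free abelian groups ∂_n : ℤ[Y_n × N(C)_n] → ℤ[Y_{n−1} × N(C)_{n−1}] by ∂_n(y, σ) = Σ_{i=0}^n (−1)^i (δ_{v_i}(d_i y), d_i σ), where v_i is the i-th vertex of σ. Then ∂_{n} ∘ ∂_{n+1} = 0 for all n ≥ 1, so these data form a chain complex (the twisted chain complex computing the twisted homology of C). -/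
open CategoryTheory Simplicial

universe u

/-- The twisted boundary `∂_{n+1} : ℤ[Y_{n+1} × N(C)_{n+1}] → ℤ[Y_n × N(C)_n]`,
`∂(y, σ) = Σᵢ (−1)^i (δ_{v_i}(d_i y), d_i σ)`. -/
noncomputable def twistedBoundary {C : Type u} [SmallCategory C] (Y : SSet.{u})
    (δ : C → (Y ⟶ Y)) (n : ℕ) :
    FreeAbelianGroup (Y _⦋n + 1⦌ × nerve C _⦋n + 1⦌) →+
      FreeAbelianGroup (Y _⦋n⦌ × nerve C _⦋n⦌) :=
  FreeAbelianGroup.lift fun p =>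
    ∑ i : Fin (n + 2), ((-1 : ℤ) ^ (i : ℕ)) • FreeAbelianGroup.of (twistedFace Y δ i p)

/-! The twisted faces satisfy the semi-simplicial identities `d_i d_{j+1} = d_j d_i` for `i ≤ j`.
On the `Y`-component this combines the simplicial identity in `Y`, the naturality of the `δ_v`,
and the commutation of `δ_{v_i}` with `δ_{v_{j+1}}`, which holds because the simplex `σ`
contains a morphism `v_i ⟶ v_{j+1}`. The usual pairwise cancellation in the alternating double
sum then gives `∂ ∘ ∂ = 0`. -/

namespace Fin

theorem sum_sum_neg_one_pow_smul_eq_zero {M : Type*} [AddCommGroup M] {n : ℕ}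
    (f : Fin (n + 3) → Fin (n + 2) → M)
    (hf : ∀ i j : Fin (n + 2), i ≤ j → f j.succ i = f i.castSucc j) :
    ∑ j : Fin (n + 3), ∑ i : Fin (n + 2), ((-1 : ℤ) ^ (j + i : ℕ)) • f j i = 0 := by
  rw [← Finset.sum_product', Finset.univ_product_univ]
  let S : Finset (Fin (n + 3) × Fin (n + 2)) := {ji | (ji.1 : ℕ) ≤ ji.2}
  have mem_S {ji} : ji ∈ S ↔ (ji.1 : ℕ) ≤ ji.2 := by simp [S]
  have mem_compl_S {ji} : ji ∈ Sᶜ ↔ (ji.2 : ℕ) < ji.1 := by simp [S]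
  rw [← Finset.sum_add_sum_compl S, ← eq_neg_iff_add_eq_zero, ← Finset.sum_neg_distrib]
  -- the term at `(j, i)` with `j ≤ i` cancels the one at `(i + 1, j)`
  refine Finset.sum_bij' (fun ji h => (ji.2.succ, ji.1.castLT (by grind)))
    (fun ji h => (ji.2.castSucc, ji.1.pred (by grind))) ?_ ?_ ?_ ?_ ?_
  · rintro ⟨j, i⟩ h
    simp only [mem_S, mem_compl_S, val_succ, val_castLT] at h ⊢
    omega
  · rintro ⟨j, i⟩ h
    simp only [mem_S, mem_compl_S, val_castSucc, val_pred] at h ⊢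
    omega
  · rintro ⟨j, i⟩ h
    simp
  · rintro ⟨j, i⟩ h
    simp
  · rintro ⟨j, i⟩ h
    rw [mem_S] at h
    simp only
    rw [hf _ _ (by simpa [le_iff_val_le_val] using h), castSucc_castLT, ← neg_smul]
    congr 1
    simp only [val_succ, val_castLT, pow_add, pow_one]
    ring

end Fin

lemma nerveVertex_δ {C : Type u} [SmallCategory C] {n : ℕ} (k : Fin (n + 2))
    (σ : nerve C _⦋n + 1⦌) (i : Fin (n + 1)) :
    nerveVertex ((nerve C).δ k σ) i = nerveVertex σ (k.succAbove i) :=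
  rfl

lemma twistedFace_twistedFace_s7 {C : Type u} [SmallCategory C] {Y : SSet.{u}} {δ : C → (Y ⟶ Y)}
    (hcomm : ∀ v w : C, Nonempty (v ⟶ w) → δ v ≫ δ w = δ w ≫ δ v)
    {n : ℕ} {i j : Fin (n + 2)} (hij : i ≤ j) (p : Y _⦋n + 2⦌ × nerve C _⦋n + 2⦌) :
    twistedFace Y δ i (twistedFace Y δ j.succ p) =
      twistedFace Y δ j (twistedFace Y δ i.castSucc p) := by
  obtain ⟨y, σ⟩ := p
  have hlt : i.castSucc < j.succ := Fin.castSucc_lt_succ_iff.mpr hij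
  have hc : δ (nerveVertex σ j.succ) ≫ δ (nerveVertex σ i.castSucc) =
      δ (nerveVertex σ i.castSucc) ≫ δ (nerveVertex σ j.succ) :=
    (hcomm _ _ ⟨σ.map (homOfLE hlt.le)⟩).symm
  refine Prod.ext ?_ (SSet.δ_comp_δ_apply hij σ)
  simp only [twistedFace, nerveVertex_δ, Fin.succAbove_of_castSucc_lt _ _ hlt,
    Fin.succAbove_of_le_castSucc _ _ (Fin.castSucc_le_castSucc_iff.mpr hij),
    ← SSet.δ_naturality_apply, SSet.δ_comp_δ_apply hij y]
  exact ConcreteCategory.congr_hom (NatTrans.congr_app hc _) _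

/-- for a twisted structure `δ` on a small category `C` with coefficients in a
simplicial set `Y`, the twisted boundaries satisfy `∂_n ∘ ∂_{n+1} = 0`, so the free abelian
groups `ℤ[Y_n × N(C)_n]` form a chain complex (computing the twisted homology of `C`). -/
theorem twistedBoundary_comp_twistedBoundary {C : Type u} [SmallCategory C] (Y : SSet.{u})
    (δ : C → (Y ⟶ Y))
    (hcomm : ∀ v w : C, (Nonempty (v ⟶ w) ∨ Nonempty (w ⟶ v)) →
      δ v ≫ δ w = δ w ≫ δ v)
    (n : ℕ) :
    (twistedBoundary Y δ n).comp (twistedBoundary Y δ (n + 1)) = 0 := by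
  ext p
  simp only [AddMonoidHom.comp_apply, AddMonoidHom.zero_apply, twistedBoundary,
    FreeAbelianGroup.lift_apply_of, map_sum, map_zsmul, Finset.smul_sum, smul_smul, ← pow_add]
  exact Fin.sum_sum_neg_one_pow_smul_eq_zero _ fun i j hij =>
    congrArg FreeAbelianGroup.of
      (twistedFace_twistedFace_s7 (fun v w h => hcomm v w (Or.inl h)) hij p)
end

section
/- Let G = {G_n} be a simplicial abelian group, C a small category with a chosen object a₀, and δ a twisted structure on C with coefficients in G. For each n let C_n = (⊕_{x ∈ N(C)_n} (G_n)_x)/(G_n)_{a₀ⁿ}, the direct sum of copies of G_n indexed by the n-simplices of N(C) modulo the copy at the totally degenerate simplex a₀ⁿ, and define ∂_n : C_n → C_{n−1} by ∂_n(g_x) = Σ_{i=0}^n (−1)^i (δ_{v_i}(d_i g))_{d_i x}, where v_i is the i-th vertex of x. Then ∂_n ∘ ∂_{n+1} = 0 for all n ≥ 1, so {C_n, ∂_n} is a chain complex of abelian groups. -/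
open CategoryTheory Simplicial DirectSum

universe u

attribute [local instance] Classical.decEq

namespace TwistedAb

variable (C : Type u) [SmallCategory C] (G : SimplicialObject AddCommGrpCat.{u}) (a₀ : C)

/-- The abelian group of `n`-simplices of the simplicial abelian group `G`. -/
abbrev An (n : ℕ) : Type u := ↥(G.obj (Opposite.op (SimplexCategory.mk n)))

/-- The face map of the nerve of `C` (whose `n`-simplices are `ComposableArrows C n`). -/
def nerveFace {n : ℕ} (i : Fin (n + 2)) (x : ComposableArrows C (n + 1)) :
    ComposableArrows C n :=
  (nerve C).δ i x

/-- The totally degenerate `n`-simplex `a₀ⁿ` of the nerve at the base object `a₀`. -/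
def basept (n : ℕ) : ComposableArrows C n :=
  (CategoryTheory.Functor.const (Fin (n + 1))).obj a₀

/-- The direct sum of copies of `G_n` indexed by the `n`-simplices of the nerve. -/
abbrev AllSum (n : ℕ) : Type u :=
  ⨁ _ : ComposableArrows C n, An G n

/-- The inclusion of the copy of `G_n` labelled by the simplex `x`. -/
noncomputable def incl {n : ℕ} (x : ComposableArrows C n) : An G n →+ AllSum C G n :=
  DirectSum.of (fun _ : ComposableArrows C n => An G n) x

/-- `C_n = (⊕_{x ∈ N(C)_n} (G_n)_x) / (G_n)_{a₀ⁿ}`: the direct sum of the copies of `G_n`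
indexed by the `n`-simplices, modulo the copy at the totally degenerate simplex `a₀ⁿ`. -/
abbrev Cn (n : ℕ) : Type u :=
  AllSum C G n ⧸ (incl C G (basept C a₀ n)).range

/-- The twisted differential on the direct sum, with values in the quotient:
`∂(g_x) = Σᵢ (−1)^i (δ_{v_i}(d_i g))_{d_i x}`. -/
noncomputable def bdryAux (δ : C → (G ⟶ G)) (n : ℕ) :
    AllSum C G (n + 1) →+ Cn C G a₀ n :=
  DirectSum.toAddMonoid fun x =>
    ∑ i : Fin (n + 2), ((-1 : ℤ) ^ (i : ℕ)) •
      ((QuotientAddGroup.mk' _).comp ((incl C G (nerveFace C i x)).comp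
        ((((δ (x.obj i)).app (Opposite.op (SimplexCategory.mk n))).hom : An G n →+ An G n).comp
          ((G.δ i).hom : An G (n + 1) →+ An G n))))

lemma nerveFace_basept {n : ℕ} (i : Fin (n + 2)) :
    nerveFace C i (basept C a₀ (n + 1)) = basept C a₀ n := rfl

/-- The twisted differential `∂_{n+1} : C_{n+1} → C_n`. -/
noncomputable def bdry (δ : C → (G ⟶ G)) (n : ℕ) :
    Cn C G a₀ (n + 1) →+ Cn C G a₀ n :=
  QuotientAddGroup.lift _ (bdryAux C G a₀ δ n) (by
    rintro _ ⟨g, rfl⟩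
    show bdryAux C G a₀ δ n (incl C G (basept C a₀ (n + 1)) g) = 0
    rw [show incl C G (basept C a₀ (n+1)) g = DirectSum.of (fun _ : ComposableArrows C (n+1) => An G (n+1)) (basept C a₀ (n+1)) g from rfl,
      bdryAux, DirectSum.toAddMonoid_of]
    rw [AddMonoidHom.finset_sum_apply]
    refine Finset.sum_eq_zero fun i _ => ?_
    rw [AddMonoidHom.smul_apply, AddMonoidHom.comp_apply, QuotientAddGroup.mk'_apply,
      nerveFace_basept]
    have h0 : ((incl C G (basept C a₀ n)).comp
        (AddMonoidHom.comp ((δ ((basept C a₀ (n + 1)).obj i)).app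
          (Opposite.op (SimplexCategory.mk n))).hom (G.δ i).hom)) g ∈
        (incl C G (basept C a₀ n)).range :=
      ⟨(AddMonoidHom.comp ((δ ((basept C a₀ (n + 1)).obj i)).app
          (Opposite.op (SimplexCategory.mk n))).hom (G.δ i).hom) g, rfl⟩
    rw [(QuotientAddGroup.eq_zero_iff _).mpr h0, smul_zero])

end TwistedAb

/-! Expanding `∂ ∂ (g_x)` gives a double sum over `(i, j)` of `(-1)^(i+j)` times the twisted
face `j` of the twisted face `i` of `g_x`. For `i ≤ j` the `(i, j)` term equals the `(j + 1, i)`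
term, which has the opposite sign: `d_i d_{j+1} = d_j d_i` holds both in `G` and in the nerve,
naturality moves the twists past the faces, and the twists by the vertices `v_i` and `v_{j+1}`
of `x` commute because `x` has an arrow `v_i ⟶ v_{j+1}`. -/

theorem sum_alternating_double_eq_zero {M : Type*} [AddCommGroup M] {n : ℕ}
    (T : Fin (n + 3) → Fin (n + 2) → M)
    (hT : ∀ (i : Fin (n + 3)) (j : Fin (n + 2)) (H : i ≤ j.castSucc),
      T j.succ (i.castLT (Nat.lt_of_le_of_lt (Fin.le_iff_val_le_val.mp H) j.is_lt)) = T i j) :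
    ∑ i : Fin (n + 3), (-1 : ℤ) ^ (i : ℕ) •
      ∑ j : Fin (n + 2), (-1 : ℤ) ^ (j : ℕ) • T i j = 0 := by
  simp only [Finset.smul_sum, smul_smul, ← Finset.sum_product']
  let S : Finset (Fin (n + 3) × Fin (n + 2)) := {p | p.1 ≤ p.2.castSucc}
  -- `(i, j) ↦ (j + 1, i)` matches the terms with `i ≤ j` with the remaining ones.
  rw [Finset.univ_product_univ, ← Finset.sum_add_sum_compl S, ← eq_neg_iff_add_eq_zero,
    ← Finset.sum_neg_distrib]
  refine Finset.sum_bij (fun p hp => (p.2.succ, p.1.castLT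
      (Nat.lt_of_le_of_lt (Fin.le_iff_val_le_val.mp (Finset.mem_filter.mp hp).2) p.2.is_lt)))
    ?_ ?_ ?_ ?_
  · rintro ⟨i, j⟩ hij
    simp only [S, Finset.compl_filter, Finset.mem_filter_univ, Fin.le_def, Fin.val_castSucc,
      Fin.val_succ, Fin.val_castLT, not_le] at hij ⊢
    omega
  · rintro ⟨i, j⟩ _ ⟨i', j'⟩ _ h
    simp only [Prod.mk.injEq, Fin.succ_inj] at h
    refine Prod.ext ?_ h.1
    simpa [Fin.castSucc_castLT] using congr_arg Fin.castSucc h.2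
  · rintro ⟨i', j'⟩ hij'
    simp only [S, Finset.compl_filter, Finset.mem_filter_univ, not_le] at hij'
    have hi' : i' ≠ 0 := by rintro rfl; simp at hij'
    refine ⟨(j'.castSucc, i'.pred hi'), ?_, by simp⟩
    simp only [S, Finset.mem_filter_univ, Fin.le_def, Fin.val_castSucc, Fin.val_pred]
    simp only [Fin.lt_def, Fin.val_castSucc] at hij'
    omega
  · rintro ⟨i, j⟩ hij
    rw [hT i j (Finset.mem_filter.mp hij).2, ← neg_smul]
    congr 1
    simp only [Fin.val_succ, Fin.val_castLT, pow_succ]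
    ring

namespace TwistedAb

variable {C : Type u} [SmallCategory C] (G : SimplicialObject AddCommGrpCat.{u})

noncomputable def twistedFace (δ : C → (G ⟶ G)) {n : ℕ} (i : Fin (n + 2))
    (x : ComposableArrows C (n + 1)) (g : An G (n + 1)) : An G n :=
  (δ (x.obj i)).app _ (G.δ i g)

lemma nerveFace_nerveFace {n : ℕ} {i : Fin (n + 3)} {j : Fin (n + 2)} (H : i ≤ j.castSucc)
    (x : ComposableArrows C (n + 2)) :
    nerveFace C (i.castLT (Nat.lt_of_le_of_lt (Fin.le_iff_val_le_val.mp H) j.is_lt))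
      (nerveFace C j.succ x) = nerveFace C j (nerveFace C i x) :=
  types_congr_hom (SimplicialObject.δ_comp_δ'' (X := nerve C) H) x

lemma twistedFace_twistedFace (δ : C → (G ⟶ G)) {n : ℕ} {i : Fin (n + 3)} {j : Fin (n + 2)}
    (H : i ≤ j.castSucc) (x : ComposableArrows C (n + 2)) (g : An G (n + 2))
    (hcomm : δ (x.obj i) ≫ δ (x.obj j.succ) = δ (x.obj j.succ) ≫ δ (x.obj i)) :
    twistedFace G δ (i.castLT (Nat.lt_of_le_of_lt (Fin.le_iff_val_le_val.mp H) j.is_lt))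
        (nerveFace C j.succ x) (twistedFace G δ j.succ x g) =
      twistedFace G δ j (nerveFace C i x) (twistedFace G δ i x g) := by
  have hvi : (nerveFace C j.succ x).obj
      (i.castLT (Nat.lt_of_le_of_lt (Fin.le_iff_val_le_val.mp H) j.is_lt)) = x.obj i := by
    rw [nerveFace, nerve.δ_obj, Fin.succAbove_of_castSucc_lt _ _
      (by simpa [Fin.lt_def] using Nat.lt_succ_of_le H), Fin.castSucc_castLT]
  have hvj : (nerveFace C i x).obj j = x.obj j.succ := by
    rw [nerveFace, nerve.δ_obj, Fin.succAbove_of_le_castSucc _ _ H]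
  have key : G.δ j.succ ≫ (δ (x.obj j.succ)).app _ ≫
        G.δ (i.castLT (Nat.lt_of_le_of_lt (Fin.le_iff_val_le_val.mp H) j.is_lt)) ≫
        (δ (x.obj i)).app _ =
      G.δ i ≫ (δ (x.obj i)).app _ ≫ G.δ j ≫ (δ (x.obj j.succ)).app _ := by
    rw [← SimplicialObject.δ_naturality_assoc, ← SimplicialObject.δ_naturality_assoc,
      G.δ_comp_δ''_assoc H, ← NatTrans.comp_app, ← NatTrans.comp_app, hcomm]
  simpa only [twistedFace, hvi, hvj, ConcreteCategory.comp_apply] using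
    ConcreteCategory.congr_hom key g

variable (C) (a₀ : C)

lemma bdry_mk_incl (δ : C → (G ⟶ G)) (n : ℕ) (x : ComposableArrows C (n + 1))
    (g : An G (n + 1)) :
    bdry C G a₀ δ n (incl C G x g : AllSum C G (n + 1)) =
      ∑ i : Fin (n + 2), (-1 : ℤ) ^ (i : ℕ) •
        ((incl C G (nerveFace C i x) (twistedFace G δ i x g) : AllSum C G n) : Cn C G a₀ n) := by
  change bdryAux C G a₀ δ n (DirectSum.of _ x g) = _
  rw [bdryAux, DirectSum.toAddMonoid_of, AddMonoidHom.finsetSum_apply]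
  rfl

end TwistedAb

/-- for a twisted structure `δ` on a small category `C` (with base object `a₀`)
with coefficients in a simplicial abelian group `G`, the twisted differentials on
`C_n = (⊕_{x ∈ N(C)_n} (G_n)_x)/(G_n)_{a₀ⁿ}` satisfy `∂_n ∘ ∂_{n+1} = 0`, so `{C_n, ∂_n}` is
a chain complex of abelian groups. -/
theorem TwistedAb.bdry_comp_bdry {C : Type u} [SmallCategory C]
    (G : SimplicialObject AddCommGrpCat.{u}) (a₀ : C) (δ : C → (G ⟶ G))
    (hcomm : ∀ v w : C, (Nonempty (v ⟶ w) ∨ Nonempty (w ⟶ v)) →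
      δ v ≫ δ w = δ w ≫ δ v)
    (n : ℕ) :
    (bdry C G a₀ δ n).comp (bdry C G a₀ δ (n + 1)) = 0 := by
  refine QuotientAddGroup.addMonoidHom_ext _ (DirectSum.addHom_ext fun x g => ?_)
  change bdry C G a₀ δ n (bdry C G a₀ δ (n + 1) (incl C G x g : AllSum C G (n + 2))) = 0
  simp only [bdry_mk_incl, map_sum, map_zsmul]
  refine sum_alternating_double_eq_zero _ fun i j H => ?_
  have hle : i ≤ j.succ := H.trans (Fin.castSucc_le_succ j)
  rw [nerveFace_nerveFace H, twistedFace_twistedFace G δ H x g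
    (hcomm _ _ (Or.inl ⟨x.map (homOfLE hle)⟩))]
end

section
/- Let Y be a simplicial set and δ_0, …, δ_n pairwise commuting simplicial automorphisms of Y. For a q-simplex w of Δ[n] (a monotone map w : {0,…,q} → {0,…,n}) let m_k(w) be the number of p with w(p) = k, and define α_q : Y_q × Δ[n]_q → Y_q × Δ[n]_q by α_q(y, w) = ((δ_0^{1−m_0(w)} ∘ δ_1^{1−m_1(w)} ∘ ⋯ ∘ δ_n^{1−m_n(w)})(y), w). Then α intertwines the untwisted and twisted faces: for all q ≥ 1 and all 0 ≤ i ≤ q, d_i^δ(α_q(y, w)) = α_{q−1}(d_i y, d_i w). -/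
/-!
Faces of `Y` commute with every simplicial automorphism, so the claim reduces to
`δ_{w(i)} ∘ untwist(w) = untwist(d_i w)`. Deleting the `i`-th vertex of `w` lowers `m_{w(i)}`
by one and leaves the other multiplicities unchanged; since the `δ_k` commute, raising the
exponent of `δ_{w(i)}` by one multiplies the ordered product by `δ_{w(i)}`.
-/

open CategoryTheory Simplicial

universe u

namespace TwistedDelta

/-- The `q`-simplices of the standard simplicial `n`-simplex `Δ[n]`:
monotone maps `{0,…,q} → {0,…,n}`. -/
def DeltaSimp (n q : ℕ) : Type :=
  { w : Fin (q + 1) → Fin (n + 1) // Monotone w }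

/-- The face `d_i` of `Δ[n]`, precomposing with the `i`-th coface (skipping `i`). -/
def DeltaSimp.face {n q : ℕ} (i : Fin (q + 2)) (w : DeltaSimp n (q + 1)) : DeltaSimp n q :=
  ⟨w.1 ∘ i.succAbove, w.2.comp (Fin.strictMono_succAbove i).monotone⟩

/-- The degeneracy `s_i` of `Δ[n]`, precomposing with the `i`-th codegeneracy (repeating `i`). -/
def DeltaSimp.degen {n q : ℕ} (i : Fin (q + 1)) (w : DeltaSimp n q) : DeltaSimp n (q + 1) :=
  ⟨w.1 ∘ i.predAbove, w.2.comp (Fin.predAbove_right_monotone i)⟩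

/-- `m_k(w)`: the number of `p` with `w(p) = k`. -/
def mult {n q : ℕ} (k : Fin (n + 1)) (w : DeltaSimp n q) : ℕ :=
  (Finset.univ.filter fun p => w.1 p = k).card

/-- The untwisting automorphism `δ_0^{1−m_0(w)} ∘ δ_1^{1−m_1(w)} ∘ ⋯ ∘ δ_n^{1−m_n(w)}`. -/
def untwist {n : ℕ} (Y : SSet.{u}) (δ : Fin (n + 1) → Aut Y) {q : ℕ} (w : DeltaSimp n q) :
    Aut Y :=
  (List.ofFn fun k => (δ k) ^ ((1 : ℤ) - mult k w)).prod

/-- The map `α_q : Y_q × Δ[n]_q → Y_q × Δ[n]_q`,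
`α_q(y, w) = ((δ_0^{1−m_0(w)} ∘ ⋯ ∘ δ_n^{1−m_n(w)})(y), w)`. -/
def alphaMap {n : ℕ} (Y : SSet.{u}) (δ : Fin (n + 1) → Aut Y) (q : ℕ) :
    Y _⦋q⦌ × DeltaSimp n q → Y _⦋q⦌ × DeltaSimp n q :=
  fun p => ((untwist Y δ p.2).hom.app (Opposite.op (SimplexCategory.mk q)) p.1, p.2)

/-- The twisted face `d_i^δ(y, w) = (δ_{w(i)}(d_i y), d_i w)` on `Y_q × Δ[n]_q`. -/
def twistedFace {n : ℕ} (Y : SSet.{u}) (δ : Fin (n + 1) → Aut Y) {q : ℕ}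
    (i : Fin (q + 2)) :
    Y _⦋q + 1⦌ × DeltaSimp n (q + 1) → Y _⦋q⦌ × DeltaSimp n q :=
  fun p => ((δ (p.2.1 i)).hom.app (Opposite.op (SimplexCategory.mk q)) (Y.δ i p.1),
    p.2.face i)

/-- The twisted degeneracy `s_i^δ(y, w) = (δ_{w(i)}⁻¹(s_i y), s_i w)` on `Y_q × Δ[n]_q`. -/
def twistedDegeneracy {n : ℕ} (Y : SSet.{u}) (δ : Fin (n + 1) → Aut Y) {q : ℕ}
    (i : Fin (q + 1)) :
    Y _⦋q⦌ × DeltaSimp n q → Y _⦋q + 1⦌ × DeltaSimp n (q + 1) :=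
  fun p => ((δ (p.2.1 i)).inv.app (Opposite.op (SimplexCategory.mk (q + 1))) (Y.σ i p.1),
    p.2.degen i)

end TwistedDelta

open scoped IsMulCommutative in
theorem prod_ofFn_zpow_add_single {G : Type*} [Group G] {m : ℕ} (g : Fin m → G)
    (hcomm : ∀ k l, Commute (g k) (g l)) (e : Fin m → ℤ) (j : Fin m) :
    (List.ofFn fun k => g k ^ (e k + (Pi.single j 1 : Fin m → ℤ) k)).prod =
      g j * (List.ofFn fun k => g k ^ e k).prod := by
  -- Commuting elements generate a commutative subgroup, where the ordered product is a `∏`.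
  let H := Subgroup.closure (Set.range g)
  have : IsMulCommutative H := Subgroup.isMulCommutative_closure <| by
    rintro _ ⟨k, rfl⟩ _ ⟨l, rfl⟩; exact hcomm k l
  let x : Fin m → H := fun k => ⟨g k, Subgroup.subset_closure ⟨k, rfl⟩⟩
  have hprod : ∀ e' : Fin m → ℤ,
      (List.ofFn fun k => g k ^ e' k).prod = ((∏ k, x k ^ e' k : H) : G) := by
    intro e'
    rw [← List.prod_ofFn, ← Subgroup.subtype_apply, map_list_prod, List.map_ofFn]
    rfl
  have hsingle : ∏ k, x k ^ (Pi.single j 1 : Fin m → ℤ) k = x j := by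
    simp [Pi.single_apply]
  rw [hprod, hprod, show g j = x j from rfl, ← Subgroup.coe_mul, mul_comm (x j)]
  simp only [zpow_add, Finset.prod_mul_distrib, hsingle]

namespace TwistedDelta

theorem mult_eq_ite_add_mult_face {n q : ℕ} (k : Fin (n + 1)) (i : Fin (q + 2))
    (w : DeltaSimp n (q + 1)) :
    mult k w = (if w.1 i = k then 1 else 0) + mult k (w.face i) := by
  unfold mult DeltaSimp.face
  rw [Finset.card_filter, Finset.card_filter]
  exact Fin.sum_univ_succAbove (fun p => if w.1 p = k then 1 else 0) i

theorem untwist_face {n : ℕ} (Y : SSet.{u}) (δ : Fin (n + 1) → Aut Y)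
    (hcomm : ∀ k l : Fin (n + 1), Commute (δ k) (δ l)) {q : ℕ} (i : Fin (q + 2))
    (w : DeltaSimp n (q + 1)) :
    untwist Y δ (w.face i) = δ (w.1 i) * untwist Y δ w := by
  have hexp : ∀ k, (1 : ℤ) - mult k (w.face i) =
      (1 - mult k w) + (Pi.single (w.1 i) 1 : Fin (n + 1) → ℤ) k := by
    intro k
    rw [mult_eq_ite_add_mult_face k i w]
    obtain rfl | hk := eq_or_ne k (w.1 i)
    · simp only [if_true, Pi.single_eq_same]
      push_cast
      ring
    · simp [hk, hk.symm]
  simp only [untwist, hexp]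
  exact prod_ofFn_zpow_add_single δ hcomm _ _

end TwistedDelta

/-- for pairwise commuting simplicial automorphisms `δ_0, …, δ_n` of a simplicial
set `Y`, the map `α` intertwines the untwisted faces of `Y × Δ[n]` with the twisted faces:
`d_i^δ(α_q(y, w)) = α_{q−1}(d_i y, d_i w)`. -/
theorem TwistedDelta.alpha_intertwines_faces {n : ℕ} (Y : SSet.{u})
    (δ : Fin (n + 1) → Aut Y)
    (hcomm : ∀ k l : Fin (n + 1), Commute (δ k) (δ l))
    (q : ℕ) (i : Fin (q + 2)) (y : Y _⦋q + 1⦌) (w : DeltaSimp n (q + 1)) :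
    twistedFace Y δ i (alphaMap Y δ (q + 1) (y, w)) =
      alphaMap Y δ q (Y.δ i y, w.face i) := by
  refine Prod.ext ?_ rfl
  change (δ (w.1 i)).hom.app _ (Y.δ i ((untwist Y δ w).hom.app _ y)) =
    (untwist Y δ (w.face i)).hom.app _ (Y.δ i y)
  rw [← SSet.δ_naturality_apply, untwist_face Y δ hcomm, Aut.Aut_mul_def]
  rfl
end

section
/- Let C be a small category, Y a simplicial set, and δ a nonsingular twisted structure on C with coefficients in Y. Let X = Y ×_δ N(C) be the δ-twisted Cartesian product (the simplicial set with n-simplices Y_n × N(C)_n, twisted faces d_i^δ(y,σ) = (δ_{v_i}(d_i y), d_i σ) and twisted degeneracies s_i^δ(y,σ) = (δ_{v_i}^{-1}(s_i y), s_i σ)), and let p : X → N(C) be the second-coordinate projection. Then p is a simplicial map, and for every n and every n-simplex b of N(C), with f_b : Δ[n] → N(C) the simplicial map representing b, the pullback of p along f_b in the category of simplicial sets is isomorphic, as a simplicial set over Δ[n], to the projection Y × Δ[n] → Δ[n]. In other words, p is a simplicial fibre bundle with fibre Y. -/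
open CategoryTheory Simplicial

universe u

namespace TwistedBundle

/-- The `i`-th vertex of an `n`-simplex of the nerve of a small category `C`. -/
def nerveVertex {C : Type u} [SmallCategory C] {n : ℕ}
    (σ : nerve C _⦋n⦌) (i : Fin (n + 1)) : C :=
  σ.obj i

/-- The twisted face map `d_i^δ(y, σ) = (δ_{v_i}(d_i y), d_i σ)` of the δ-twisted Cartesian
product `Y ×_δ N(C)`. -/
def twistedFace {C : Type u} [SmallCategory C] (Y : SSet.{u})
    (δ : C → (Y ≅ Y)) {n : ℕ} (i : Fin (n + 2)) :
    Y _⦋n + 1⦌ × nerve C _⦋n + 1⦌ → Y _⦋n⦌ × nerve C _⦋n⦌ :=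
  fun p => ((δ (nerveVertex p.2 i)).hom.app (Opposite.op (SimplexCategory.mk n)) (Y.δ i p.1),
    (nerve C).δ i p.2)

/-- The twisted degeneracy map `s_i^δ(y, σ) = (δ_{v_i}⁻¹(s_i y), s_i σ)` of `Y ×_δ N(C)`. -/
def twistedDegeneracy {C : Type u} [SmallCategory C] (Y : SSet.{u})
    (δ : C → (Y ≅ Y)) {n : ℕ} (i : Fin (n + 1)) :
    Y _⦋n⦌ × nerve C _⦋n⦌ → Y _⦋n + 1⦌ × nerve C _⦋n + 1⦌ :=
  fun p => ((δ (nerveVertex p.2 i)).inv.app (Opposite.op (SimplexCategory.mk (n + 1)))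
      (Y.σ i p.1),
    (nerve C).σ i p.2)

/-- The `q`-simplices of the standard simplicial `n`-simplex `Δ[n]`:
monotone maps `{0,…,q} → {0,…,n}`. -/
def DeltaSimp (n q : ℕ) : Type :=
  { w : Fin (q + 1) → Fin (n + 1) // Monotone w }

/-- The face `d_i` of `Δ[n]`. -/
def DeltaSimp.face {n q : ℕ} (i : Fin (q + 2)) (w : DeltaSimp n (q + 1)) : DeltaSimp n q :=
  ⟨w.1 ∘ i.succAbove, w.2.comp (Fin.strictMono_succAbove i).monotone⟩

/-- The degeneracy `s_i` of `Δ[n]`. -/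
def DeltaSimp.degen {n q : ℕ} (i : Fin (q + 1)) (w : DeltaSimp n q) : DeltaSimp n (q + 1) :=
  ⟨w.1 ∘ i.predAbove, w.2.comp (Fin.predAbove_right_monotone i)⟩

/-- `f_b(w)`: the `q`-simplex of the nerve obtained by applying the representing map
`f_b : Δ[n] → N(C)` of the `n`-simplex `b` to the `q`-simplex `w` of `Δ[n]`. -/
def pull {C : Type u} [SmallCategory C] {n : ℕ} (b : nerve C _⦋n⦌) {q : ℕ}
    (w : DeltaSimp n q) : nerve C _⦋q⦌ :=
  (nerve C).map (SimplexCategory.mkHom ⟨w.1, w.2⟩).op b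

end TwistedBundle

/-!
Along a simplex `b = (v_0 → ⋯ → v_n)` the automorphisms `δ_{v_j}` pairwise commute, so a
`q`-simplex `(y, w)` of `Y × Δ[n]` can be sent to `(Φ_w y, f_b w)` with
`Φ_w = ∏_j δ_{v_{w(j)}}⁻¹`. A face `d_i` of `w` drops the factor of index `w(i)` and a
degeneracy `s_i` doubles it, which is exactly the twist by `δ_{v_{w(i)}}`, resp. its inverse,
in the faces and degeneracies of `Y ×_δ N(C)`.
-/

open Opposite

namespace TwistedBundle

namespace DeltaSimp

variable {M : Type*} [CommMonoid M] {n q : ℕ}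

def weight (g : Fin (n + 1) → M) (w : DeltaSimp n q) : M :=
  ∏ j, g (w.1 j)

lemma weight_eq_mul_weight_face (g : Fin (n + 1) → M) (i : Fin (q + 2))
    (w : DeltaSimp n (q + 1)) : w.weight g = g (w.1 i) * (w.face i).weight g :=
  Fin.prod_univ_succAbove _ i

lemma weight_degen (g : Fin (n + 1) → M) (i : Fin (q + 1)) (w : DeltaSimp n q) :
    (w.degen i).weight g = g (w.1 i) * w.weight g := by
  rw [weight, Fin.prod_univ_succAbove _ i.castSucc]
  simp only [degen, Function.comp_apply, Fin.predAbove_castSucc_self, Fin.predAbove_succAbove]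
  rfl

end DeltaSimp

variable {C : Type u} [SmallCategory C] {n : ℕ}

lemma pull_face (b : nerve C _⦋n⦌) {q : ℕ} (i : Fin (q + 2)) (w : DeltaSimp n (q + 1)) :
    pull b (w.face i) = (nerve C).δ i (pull b w) := by
  rw [pull, pull, SimplicialObject.δ, ← Functor.map_comp_apply, ← op_comp]
  rfl

lemma pull_degen (b : nerve C _⦋n⦌) {q : ℕ} (i : Fin (q + 1)) (w : DeltaSimp n q) :
    pull b (w.degen i) = (nerve C).σ i (pull b w) := by
  rw [pull, pull, SimplicialObject.σ, ← Functor.map_comp_apply, ← op_comp]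
  rfl

/-- The rules making `(y, w) ↦ (Φ_w y, f_b w)` an isomorphism from `Y × Δ[n]` onto the pullback
of `Y ×_δ N(C)` along `f_b`. -/
structure IsTrivializingFamily (Y : SSet.{u}) (δ : C → (Y ≅ Y)) (b : nerve C _⦋n⦌)
    (Φ : (q : ℕ) → DeltaSimp n q → (Y ≅ Y)) : Prop where
  face : ∀ (q : ℕ) (i : Fin (q + 2)) (w : DeltaSimp n (q + 1)),
    Φ q (w.face i) = Φ (q + 1) w ≪≫ δ (b.obj (w.1 i))
  degen : ∀ (q : ℕ) (i : Fin (q + 1)) (w : DeltaSimp n q),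
    Φ (q + 1) (w.degen i) = Φ q w ≪≫ (δ (b.obj (w.1 i))).symm

lemma nonempty_hom_or_hom_obj (b : nerve C _⦋n⦌) (u u' : Fin (n + 1)) :
    Nonempty (b.obj u ⟶ b.obj u') ∨ Nonempty (b.obj u' ⟶ b.obj u) := by
  rcases le_total u u' with h | h
  exacts [Or.inl ⟨b.map (homOfLE h)⟩, Or.inr ⟨b.map (homOfLE h)⟩]

open scoped IsMulCommutative in
lemma exists_isTrivializingFamily (Y : SSet.{u}) (δ : C → (Y ≅ Y))
    (hcomm : ∀ v w : C, (Nonempty (v ⟶ w) ∨ Nonempty (w ⟶ v)) →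
      (δ v).hom ≫ (δ w).hom = (δ w).hom ≫ (δ v).hom)
    (b : nerve C _⦋n⦌) : ∃ Φ, IsTrivializingFamily Y δ b Φ := by
  let D : Fin (n + 1) → Aut Y := fun u => δ (b.obj u)
  let S := Subgroup.closure (Set.range D)
  have : IsMulCommutative S := Subgroup.isMulCommutative_closure <| by
    rintro _ ⟨u, rfl⟩ _ ⟨u', rfl⟩
    exact Iso.ext (hcomm _ _ (nonempty_hom_or_hom_obj b u u')).symm
  let g : Fin (n + 1) → S := fun u => ⟨D u, Subgroup.subset_closure ⟨u, rfl⟩⟩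
  refine ⟨fun q w => ((w.weight g)⁻¹ : S).val, ⟨fun q i w => ?_, fun q i w => ?_⟩⟩
  · have h : ((w.face i).weight g)⁻¹ = g (w.1 i) * (w.weight g)⁻¹ := by
      rw [DeltaSimp.weight_eq_mul_weight_face g i w, mul_inv, mul_inv_cancel_left]
    exact congrArg Subtype.val h
  · have h : ((w.degen i).weight g)⁻¹ = (g (w.1 i))⁻¹ * (w.weight g)⁻¹ := by
      rw [DeltaSimp.weight_degen, mul_inv]
    exact congrArg Subtype.val h

variable (Y : SSet.{u}) (Φ : (q : ℕ) → DeltaSimp n q → (Y ≅ Y)) (b : nerve C _⦋n⦌)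

def trivialization (q : ℕ) (p : Y _⦋q⦌ × DeltaSimp n q) :
    (Y _⦋q⦌ × nerve C _⦋q⦌) × DeltaSimp n q :=
  (((Φ q p.2).hom.app (op ⦋q⦌) p.1, pull b p.2), p.2)

lemma trivialization_injective (q : ℕ) : Function.Injective (trivialization Y Φ b q) := by
  rintro ⟨y₁, w⟩ ⟨y₂, w'⟩ h
  obtain rfl : w = w' := congrArg Prod.snd h
  have hy := congrArg (fun z => (Φ q w).inv.app (op ⦋q⦌) z.1.1) h
  simpa [trivialization] using hy

lemma mem_range_trivialization {q : ℕ} (z : (Y _⦋q⦌ × nerve C _⦋q⦌) × DeltaSimp n q)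
    (hz : z.1.2 = pull b z.2) : z ∈ Set.range (trivialization Y Φ b q) := by
  obtain ⟨⟨y, σ⟩, w⟩ := z
  obtain rfl : σ = pull b w := hz
  refine ⟨((Φ q w).inv.app (op ⦋q⦌) y, w), ?_⟩
  simp [trivialization]

variable {Y Φ b} {δ : C → (Y ≅ Y)}

lemma trivialization_face (hΦ : IsTrivializingFamily Y δ b Φ) (q : ℕ) (i : Fin (q + 2))
    (y : Y _⦋q + 1⦌) (w : DeltaSimp n (q + 1)) :
    trivialization Y Φ b q (Y.δ i y, w.face i) =
      (twistedFace Y δ i (trivialization Y Φ b (q + 1) (y, w)).1, w.face i) := by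
  refine Prod.ext (Prod.ext ?_ (pull_face b i w)) rfl
  change (Φ q (w.face i)).hom.app _ (Y.δ i y) =
    (δ (b.obj (w.1 i))).hom.app _ (Y.δ i ((Φ (q + 1) w).hom.app _ y))
  rw [hΦ.face, ← SSet.δ_naturality_apply]
  rfl

lemma trivialization_degen (hΦ : IsTrivializingFamily Y δ b Φ) (q : ℕ) (i : Fin (q + 1))
    (y : Y _⦋q⦌) (w : DeltaSimp n q) :
    trivialization Y Φ b (q + 1) (Y.σ i y, w.degen i) =
      (twistedDegeneracy Y δ i (trivialization Y Φ b q (y, w)).1, w.degen i) := by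
  refine Prod.ext (Prod.ext ?_ (pull_degen b i w)) rfl
  change (Φ (q + 1) (w.degen i)).hom.app _ (Y.σ i y) =
    (δ (b.obj (w.1 i))).inv.app _ (Y.σ i ((Φ q w).hom.app _ y))
  rw [hΦ.degen, ← SSet.σ_naturality_apply]
  rfl

end TwistedBundle

open TwistedBundle in
/-- let `δ` be a nonsingular twisted structure on a small category `C` with
coefficients in a simplicial set `Y`, and let `X = Y ×_δ N(C)` be the δ-twisted Cartesian
product.  Then the second-coordinate projection `p : X → N(C)` is a simplicial map, and for
every `n`-simplex `b` of `N(C)` the pullback of `p` along the representing map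
`f_b : Δ[n] → N(C)` is isomorphic, as a simplicial set over `Δ[n]`, to the projection
`Y × Δ[n] → Δ[n]`; i.e. `p` is a simplicial fibre bundle with fibre `Y`.  The isomorphism is
given by a family of maps `β_q` from `Y_q × Δ[n]_q` to the pullback that is levelwise
bijective onto the pullback, commutes with the projections to `Δ[n]`, and intertwines the
(untwisted) faces and degeneracies of `Y × Δ[n]` with the (twisted) ones of the pullback. -/
theorem TwistedBundle.fibre_bundle {C : Type u} [SmallCategory C] (Y : SSet.{u})
    (δ : C → (Y ≅ Y))
    (hcomm : ∀ v w : C, (Nonempty (v ⟶ w) ∨ Nonempty (w ⟶ v)) →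
      (δ v).hom ≫ (δ w).hom = (δ w).hom ≫ (δ v).hom) :
    -- the projection `p` commutes with the twisted faces and degeneracies
    (∀ (q : ℕ) (i : Fin (q + 2)) (x : Y _⦋q + 1⦌ × nerve C _⦋q + 1⦌),
      (twistedFace Y δ i x).2 = (nerve C).δ i x.2) ∧
    (∀ (q : ℕ) (i : Fin (q + 1)) (x : Y _⦋q⦌ × nerve C _⦋q⦌),
      (twistedDegeneracy Y δ i x).2 = (nerve C).σ i x.2) ∧
    -- for each simplex `b` of the nerve, the pullback of `p` along `f_b` is trivial
    (∀ (n : ℕ) (b : nerve C _⦋n⦌),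
      ∃ β : ∀ q : ℕ, Y _⦋q⦌ × DeltaSimp n q → (Y _⦋q⦌ × nerve C _⦋q⦌) × DeltaSimp n q,
        -- β lands in the pullback of `p` along `f_b`
        (∀ (q : ℕ) (p : Y _⦋q⦌ × DeltaSimp n q), (β q p).1.2 = pull b (β q p).2) ∧
        -- β commutes with the projections to `Δ[n]`
        (∀ (q : ℕ) (p : Y _⦋q⦌ × DeltaSimp n q), (β q p).2 = p.2) ∧
        -- β is injective and surjective onto the pullback
        (∀ q : ℕ, Function.Injective (β q)) ∧
        (∀ (q : ℕ) (z : (Y _⦋q⦌ × nerve C _⦋q⦌) × DeltaSimp n q),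
          z.1.2 = pull b z.2 → z ∈ Set.range (β q)) ∧
        -- β intertwines the faces of `Y × Δ[n]` with the twisted faces of the pullback
        (∀ (q : ℕ) (i : Fin (q + 2)) (y : Y _⦋q + 1⦌) (w : DeltaSimp n (q + 1)),
          β q (Y.δ i y, w.face i) =
            (twistedFace Y δ i (β (q + 1) (y, w)).1, ((β (q + 1) (y, w)).2).face i)) ∧
        -- β intertwines the degeneracies of `Y × Δ[n]` with the twisted ones
        (∀ (q : ℕ) (i : Fin (q + 1)) (y : Y _⦋q⦌) (w : DeltaSimp n q),
          β (q + 1) (Y.σ i y, w.degen i) =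
            (twistedDegeneracy Y δ i (β q (y, w)).1, ((β q (y, w)).2).degen i))) := by
  refine ⟨fun q i x => rfl, fun q i x => rfl, fun n b => ?_⟩
  obtain ⟨Φ, hΦ⟩ := exists_isTrivializingFamily Y δ hcomm b
  exact ⟨trivialization Y Φ b, fun q p => rfl, fun q p => rfl,
    trivialization_injective Y Φ b, fun q => mem_range_trivialization Y Φ b,
    trivialization_face hΦ, trivialization_degen hΦ⟩
end

section
/- Let C be a small category and let C⁺ = WithInitial(C) be the category obtained from C by freely adjoining an initial object a (so there is exactly one morphism a → v for every object v, and the only endomorphism of a is the identity). Let A be an abelian group regarded as a discrete simplicial group, and let δ assign to each object v of C⁺ an endomorphism δ_v of A such that δ_v ∘ δ_w = δ_w ∘ δ_v whenever there is a morphism between v and w, with δ_a an automorphism of A. Take a as basepoint, set C_n = ⊕_{x ∈ N(C⁺)_n, x ≠ aⁿ} A (aⁿ the totally degenerate n-simplex at a), with twisted faces d_i^δ(g_x) = (δ_{v_i}(g))_{d_i x}, and define Φ : C_n → C_{n+1} by Φ(g_x) = (δ_a^{-1}(g))_{a·x}, where a·x is the (n+1)-simplex obtained from x by prepending a with its unique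 morphism to the first vertex of x. Then d_0^δ ∘ Φ = id on C_n for all n ≥ 0, and d_i^δ ∘ Φ = Φ ∘ d_{i−1}^δ on C_n for all n ≥ 1 and 1 ≤ i ≤ n+1, while d_1^δ ∘ Φ = 0 on C_0. -/
open CategoryTheory Simplicial DirectSum

universe u

attribute [local instance] Classical.decEq

namespace ConeCat

variable (C : Type u) [SmallCategory C]

/-- The `n`-simplices of the nerve of `C⁺ = WithInitial C`. -/
abbrev NerveP (n : ℕ) : Type u := ComposableArrows (WithInitial C) n

/-- The face map of the nerve of `C⁺`. -/
def nerveFace {n : ℕ} (i : Fin (n + 2)) (x : NerveP C (n + 1)) : NerveP C n :=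
  (nerve (WithInitial C)).δ i x

/-- The totally degenerate `n`-simplex `aⁿ` at the adjoined initial object `a = star`. -/
def basept (n : ℕ) : NerveP C n :=
  (CategoryTheory.Functor.const (Fin (n + 1))).obj (WithInitial.star)

/-- `a·x`: the `(n+1)`-simplex obtained from `x` by prepending the initial object `a` via
its unique morphism to the first vertex of `x`. -/
def aDot {n : ℕ} (x : NerveP C n) : NerveP C (n + 1) :=
  x.precomp (Limits.IsInitial.to WithInitial.starInitial x.left)

variable (A : Type u) [AddCommGroup A]

/-- `C_n = ⊕_{x ∈ N(C⁺)_n, x ≠ aⁿ} A`. -/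
abbrev Cn (n : ℕ) : Type u :=
  ⨁ _ : { x : NerveP C n // x ≠ basept C n }, A

/-- The inclusion of the copy of `A` labelled by `x`; the copy labelled by the basepoint
simplex `aⁿ` is set to zero. -/
noncomputable def embHom {n : ℕ} (x : NerveP C n) : A →+ Cn C A n :=
  if h : x = basept C n then 0
  else DirectSum.of (fun _ : { x : NerveP C n // x ≠ basept C n } => A) ⟨x, h⟩

/-- The twisted face homomorphism `d_i^δ(g_x) = (δ_{v_i}(g))_{d_i x}` (the group `A` being a
discrete simplicial group, `d_i` acts as the identity on `A`). -/
noncomputable def dFace (δ : WithInitial C → (A →+ A)) (n : ℕ) (i : Fin (n + 2)) :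
    Cn C A (n + 1) →+ Cn C A n :=
  DirectSum.toAddMonoid fun x => (embHom C A (nerveFace C i x.1)).comp (δ (x.1.obj i))

/-- The contracting homotopy `Φ(g_x) = (δ_a⁻¹(g))_{a·x}`. -/
noncomputable def Phi (σa : A ≃+ A) (n : ℕ) : Cn C A n →+ Cn C A (n + 1) :=
  DirectSum.toAddMonoid fun x => (embHom C A (aDot C x.1)).comp σa.symm.toAddMonoidHom

/-- The twisted differential `∂_{n+1} = Σᵢ (−1)^i d_i^δ : C_{n+1} → C_n`. -/
noncomputable def bdry (δ : WithInitial C → (A →+ A)) (n : ℕ) :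
    Cn C A (n + 1) →+ Cn C A n :=
  ∑ i : Fin (n + 2), ((-1 : ℤ) ^ (i : ℕ)) • dFace C A δ n i

end ConeCat

/-! A simplex whose first vertex is `a` is `a·y` for its zeroth face `y`, since the first arrow
out of the initial object is forced. Hence `d₀(a·x) = x`, `d_{i+1}(a·x) = a·(d_i x)`, and for a
vertex `x` the edge `d₁(a·x)` degenerates to the basepoint `a⁰`, whose copy of `A` is zero. On
coefficients, `d₀^δ ∘ Φ` applies `δ_a ∘ δ_a⁻¹`, while `d_{i+1}^δ ∘ Φ` and `Φ ∘ d_i^δ` differ only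
in the order of `δ_a⁻¹` and `δ_{x_i}`, which commute because there is an arrow `a → x_i`. -/

namespace ConeCat

variable {C : Type u} [SmallCategory C]

lemma aDot_obj_zero {n : ℕ} (x : NerveP C n) : (aDot C x).obj 0 = WithInitial.star := rfl

lemma aDot_obj_succ {n : ℕ} (x : NerveP C n) (i : Fin (n + 1)) :
    (aDot C x).obj i.succ = x.obj i := rfl

lemma nerveFace_zero_aDot {n : ℕ} (x : NerveP C n) : nerveFace C 0 (aDot C x) = x := rfl

lemma eq_aDot_δ₀ {n : ℕ} (F : NerveP C (n + 1)) (h : F.obj 0 = WithInitial.star) :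
    F = aDot C F.δ₀ := by
  have hsub {v w : WithInitial C} (hv : v = WithInitial.star) : Subsingleton (v ⟶ w) := by
    subst hv; infer_instance
  fapply CategoryTheory.Functor.ext
  · rintro ⟨_ | j, hj⟩
    · exact h
    · rfl
  · rintro ⟨_ | j, hj⟩ ⟨_ | k, hk⟩ f
    · exact (hsub h).elim _ _
    · exact (hsub h).elim _ _
    · exact absurd (leOfHom f) (by simp)
    · erw [eqToHom_refl, eqToHom_refl, Category.comp_id, Category.id_comp]
      rfl

lemma aDot_basept (n : ℕ) : aDot C (basept C n) = basept C (n + 1) :=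
  (eq_aDot_δ₀ (basept C (n + 1)) rfl).symm

lemma nerveFace_basept {n : ℕ} (i : Fin (n + 2)) : nerveFace C i (basept C (n + 1)) = basept C n :=
  rfl

lemma succFunctor_comp_δ_succ {n : ℕ} (i : Fin (n + 2)) :
    Fin.succFunctor (n + 1) ⋙ (SimplexCategory.toCat.map (SimplexCategory.δ i.succ)).toFunctor =
      (SimplexCategory.toCat.map (SimplexCategory.δ i)).toFunctor ⋙ Fin.succFunctor (n + 2) :=
  CategoryTheory.Functor.ext (fun j => Fin.succ_succAbove_succ i j)
    (fun _ _ _ => Subsingleton.elim (α := ((_ : Fin (n + 3)) ⟶ _)) _ _)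

lemma nerveFace_succ_aDot {n : ℕ} (i : Fin (n + 2)) (x : NerveP C (n + 1)) :
    nerveFace C i.succ (aDot C x) = aDot C (nerveFace C i x) := by
  have hstar : (nerveFace C i.succ (aDot C x)).obj 0 = WithInitial.star := by
    change (aDot C x).obj (i.succ.succAbove 0) = _
    rw [Fin.succ_succAbove_zero]
    rfl
  rw [eq_aDot_δ₀ _ hstar]
  congr 1
  change (aDot C x).whiskerLeft
    (Fin.succFunctor (n + 1) ⋙ (SimplexCategory.toCat.map (SimplexCategory.δ i.succ)).toFunctor) = _
  erw [succFunctor_comp_δ_succ]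
  rfl

lemma nerveFace_one_aDot (x : NerveP C 0) : nerveFace C 1 (aDot C x) = basept C 0 :=
  ComposableArrows.ext₀ rfl

variable (A : Type u) [AddCommGroup A]

lemma embHom_of {n : ℕ} {x : NerveP C n} (hx : x ≠ basept C n) :
    embHom C A x = DirectSum.of (fun _ : { x : NerveP C n // x ≠ basept C n } => A) ⟨x, hx⟩ :=
  dif_neg hx

lemma embHom_basept (n : ℕ) : embHom C A (basept C n) = 0 :=
  dif_pos rfl

lemma Cn.hom_ext {M : Type*} [AddCommMonoid M] {n : ℕ} {f f' : Cn C A n →+ M}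
    (h : ∀ (x : NerveP C n) (g : A), f (embHom C A x g) = f' (embHom C A x g)) : f = f' :=
  DirectSum.addHom_ext fun x g => by simpa only [embHom_of A x.2] using h x.1 g

lemma dFace_embHom (δ : WithInitial C → (A →+ A)) {n : ℕ} (i : Fin (n + 2))
    (x : NerveP C (n + 1)) (g : A) :
    dFace C A δ n i (embHom C A x g) = embHom C A (nerveFace C i x) (δ (x.obj i) g) := by
  by_cases hx : x = basept C (n + 1)
  · subst hx
    rw [nerveFace_basept, embHom_basept, embHom_basept, AddMonoidHom.zero_apply,
      AddMonoidHom.zero_apply, map_zero]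
  · rw [embHom_of A hx, dFace, DirectSum.toAddMonoid_of, AddMonoidHom.comp_apply]

lemma Phi_embHom (σa : A ≃+ A) {n : ℕ} (x : NerveP C n) (g : A) :
    Phi C A σa n (embHom C A x g) = embHom C A (aDot C x) (σa.symm g) := by
  by_cases hx : x = basept C n
  · subst hx
    rw [aDot_basept, embHom_basept, embHom_basept, AddMonoidHom.zero_apply,
      AddMonoidHom.zero_apply, map_zero]
  · rw [embHom_of A hx, Phi, DirectSum.toAddMonoid_of, AddMonoidHom.comp_apply]
    rfl

end ConeCat

open ConeCat in
/-- let `C⁺ = WithInitial C` be `C` with a freely adjoined initial object `a`,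
`A` an abelian group regarded as a discrete simplicial group, and `δ` a twisted structure on
`C⁺` with coefficients in `A` such that `δ_a` is an automorphism (witnessed by `σa`).  With
`Φ(g_x) = (δ_a⁻¹ g)_{a·x}`, one has `d_0^δ ∘ Φ = id` on `C_n` for all `n ≥ 0`,
`d_i^δ ∘ Φ = Φ ∘ d_{i−1}^δ` on `C_n` for all `n ≥ 1` and `1 ≤ i ≤ n + 1`, and
`d_1^δ ∘ Φ = 0` on `C_0`. -/
theorem ConeCat.homotopy_identities (C : Type u) [SmallCategory C]
    (A : Type u) [AddCommGroup A]
    (δ : WithInitial C → (A →+ A))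
    (hcomm : ∀ v w : WithInitial C, (Nonempty (v ⟶ w) ∨ Nonempty (w ⟶ v)) →
      (δ v).comp (δ w) = (δ w).comp (δ v))
    (σa : A ≃+ A) (hσa : σa.toAddMonoidHom = δ WithInitial.star) :
    (∀ n : ℕ, (dFace C A δ n 0).comp (Phi C A σa n) = AddMonoidHom.id (Cn C A n)) ∧
    (∀ (n : ℕ) (i : Fin (n + 2)),
      (dFace C A δ (n + 1) i.succ).comp (Phi C A σa (n + 1)) =
        (Phi C A σa n).comp (dFace C A δ n i)) ∧
    ((dFace C A δ 0 1).comp (Phi C A σa 0) = 0) := by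
  have hδσ (v : WithInitial C) (g : A) : δ v (σa.symm g) = σa.symm (δ v g) := by
    have h := hcomm v WithInitial.star (Or.inr ⟨WithInitial.starInitial.to v⟩)
    rw [← hσa] at h
    exact Function.Semiconj.inverses_right (f := δ v) (ga := σa) (gb := σa)
      (DFunLike.congr_fun h) σa.right_inv σa.left_inv g
  refine ⟨fun n => Cn.hom_ext A fun x g => ?_, fun n i => Cn.hom_ext A fun x g => ?_,
    Cn.hom_ext A fun x g => ?_⟩
  · rw [AddMonoidHom.comp_apply, Phi_embHom, dFace_embHom, nerveFace_zero_aDot, aDot_obj_zero,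
      ← hσa, AddEquiv.coe_toAddMonoidHom, AddEquiv.apply_symm_apply, AddMonoidHom.id_apply]
  · rw [AddMonoidHom.comp_apply, AddMonoidHom.comp_apply, Phi_embHom, dFace_embHom, dFace_embHom,
      Phi_embHom, nerveFace_succ_aDot, aDot_obj_succ, hδσ]
  · rw [AddMonoidHom.comp_apply, Phi_embHom, dFace_embHom, nerveFace_one_aDot, embHom_basept,
      AddMonoidHom.zero_apply, AddMonoidHom.zero_apply]
end

section
/- Let K be an abstract simplicial complex on a linearly ordered vertex set V, let a ∉ V be a new vertex declared smaller than all elements of V, and let CK = {{a}} ∪ K ∪ {{a} ∪ σ : σ ∈ K} be the cone on K, an abstract simplicial complex on {a} ∪ V. Let A be an abelian group, and let δ assign to each vertex v of CK an endomorphism δ_v of A such that δ_v ∘ δ_w = δ_w ∘ δ_v whenever {v,w} ∈ CK, with δ_a an automorphism of A (a regular extension of a twisted structure on K). Take a as basepoint and consider the chain complex with C_n = ⊕_{x ∈ S(CK)_n, x ≠ aⁿ} A (aⁿ = (a,…,a)) and differential ∂_n(g_x) = Σ_{i=0}^n (−1)^i (δ_{v_i}(g))_{d_i x}. Then this chain complex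 is contractible: the map Φ(g_{(v_0,…,v_n)}) = (δ_a^{-1}(g))_{(a,v_0,…,v_n)} satisfies ∂_{n+1}Φ_n + Φ_{n−1}∂_n = id for n ≥ 1 and ∂_1Φ_0 = id, and hence H_n(C_*, ∂_*) = 0 for all n ≥ 0. -/
open CategoryTheory DirectSum

universe u

attribute [local instance] Classical.decEq

/-- An abstract simplicial complex with vertices in a type `V`: a collection of nonempty
finite subsets of `V` closed under passage to nonempty subsets. -/
structure AbsSimplicialComplex (V : Type u) where
  faces : Set (Finset V)
  nonempty_of_mem : ∀ s ∈ faces, s.Nonempty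
  down_closed : ∀ s ∈ faces, ∀ t ⊆ s, t.Nonempty → t ∈ faces

namespace ConeSC

variable {V : Type u} [LinearOrder V]

/-- The faces of the cone `CK = {{a}} ∪ K ∪ {{a} ∪ σ : σ ∈ K}` on `K`, where the cone point
`a = ⊥` is a new vertex smaller than all vertices of `K`. -/
def coneFaces (K : AbsSimplicialComplex V) : Set (Finset (WithBot V)) :=
  { s | s = {⊥} ∨ (∃ t ∈ K.faces, s = t.image ((↑) : V → WithBot V)) ∨
      (∃ t ∈ K.faces, s = insert ⊥ (t.image ((↑) : V → WithBot V))) }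

/-- The `n`-simplices of `S(L)`: weakly increasing tuples spanning a simplex of `L`. -/
def SSimplex (L : AbsSimplicialComplex (WithBot V)) (n : ℕ) : Type u :=
  { v : Fin (n + 1) → WithBot V // Monotone v ∧ Finset.image v Finset.univ ∈ L.faces }

/-- The face `d_i` of `S(L)`, deleting the `i`-th vertex. -/
def SSimplex.face {L : AbsSimplicialComplex (WithBot V)} {n : ℕ} (i : Fin (n + 2))
    (v : SSimplex L (n + 1)) : SSimplex L n :=
  ⟨v.1 ∘ i.succAbove,
    v.2.1.comp (Fin.strictMono_succAbove i).monotone,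
    L.down_closed _ v.2.2 _
      (by rw [← Finset.image_image]; exact Finset.image_subset_image (Finset.subset_univ _))
      (Finset.image_nonempty.mpr Finset.univ_nonempty)⟩

/-- The constant `n`-simplex `aⁿ = (⊥, …, ⊥)` at the cone point. -/
def basept (L : AbsSimplicialComplex (WithBot V))
    (hbp : ({⊥} : Finset (WithBot V)) ∈ L.faces) (n : ℕ) : SSimplex L n :=
  ⟨fun _ => ⊥, monotone_const, by
    rw [Finset.image_const Finset.univ_nonempty]; exact hbp⟩

/-- Prepending the cone point `⊥` to a simplex of the cone. -/
def coneOn {K : AbsSimplicialComplex V} {CK : AbsSimplicialComplex (WithBot V)}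
    (hCK : CK.faces = coneFaces K) {n : ℕ} (x : SSimplex CK n) : SSimplex CK (n + 1) :=
  ⟨Fin.cons ⊥ x.1,
    by
      intro a b hab
      rcases Fin.eq_zero_or_eq_succ a with ha | ⟨j, rfl⟩
      · subst ha
        rw [Fin.cons_zero]
        exact bot_le
      · rcases Fin.eq_zero_or_eq_succ b with hb | ⟨k, rfl⟩
        · subst hb
          exact absurd (Fin.le_zero_iff.mp hab) (Fin.succ_ne_zero j)
        · rw [Fin.cons_succ, Fin.cons_succ]
          exact x.2.1 (Fin.succ_le_succ_iff.mp hab),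
    by
      obtain ⟨f, hmono, hmem⟩ := x
      have himg : Finset.image (Fin.cons (⊥ : WithBot V) f) Finset.univ =
          insert ⊥ (Finset.image f Finset.univ) := by
        ext b
        simp only [Finset.mem_image, Finset.mem_insert, Finset.mem_univ, true_and]
        constructor
        · rintro ⟨a, rfl⟩
          rcases Fin.eq_zero_or_eq_succ a with ha | ⟨j, rfl⟩
          · subst ha; exact Or.inl (by rw [Fin.cons_zero])
          · exact Or.inr ⟨j, by rw [Fin.cons_succ]⟩
        · rintro (rfl | ⟨j, rfl⟩)
          · exact ⟨0, Fin.cons_zero _ _⟩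
          · exact ⟨j.succ, Fin.cons_succ _ _ _⟩
      rw [himg, hCK]
      rw [hCK] at hmem
      rcases hmem with h | ⟨t, ht, h⟩ | ⟨t, ht, h⟩
      · exact Or.inl (by rw [h]; simp)
      · exact Or.inr (Or.inr ⟨t, ht, by rw [h]⟩)
      · exact Or.inr (Or.inr ⟨t, ht, by rw [h, Finset.insert_idem]⟩)⟩

variable (A : Type u) [AddCommGroup A]

/-- `C_n = ⊕_{x ∈ S(CK)_n, x ≠ aⁿ} A`. -/
abbrev Cn (L : AbsSimplicialComplex (WithBot V))
    (hbp : ({⊥} : Finset (WithBot V)) ∈ L.faces) (n : ℕ) : Type u :=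
  ⨁ _ : { x : SSimplex L n // x ≠ basept L hbp n }, A

/-- The inclusion of the copy of `A` labelled by `x`; the copy labelled by the basepoint
simplex `aⁿ` is set to zero. -/
noncomputable def embHom {L : AbsSimplicialComplex (WithBot V)}
    {hbp : ({⊥} : Finset (WithBot V)) ∈ L.faces} {n : ℕ} (x : SSimplex L n) :
    A →+ Cn A L hbp n :=
  if h : x = basept L hbp n then 0
  else DirectSum.of (fun _ : { x : SSimplex L n // x ≠ basept L hbp n } => A) ⟨x, h⟩

/-- The twisted face homomorphism `d_i^δ(g_x) = (δ_{v_i}(g))_{d_i x}`. -/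
noncomputable def dFace {L : AbsSimplicialComplex (WithBot V)}
    (hbp : ({⊥} : Finset (WithBot V)) ∈ L.faces)
    (δ : WithBot V → (A →+ A)) (n : ℕ) (i : Fin (n + 2)) :
    Cn A L hbp (n + 1) →+ Cn A L hbp n :=
  DirectSum.toAddMonoid fun x => (embHom A (x.1.face i)).comp (δ (x.1.1 i))

/-- The twisted differential `∂_{n+1}(g_x) = Σᵢ (−1)^i (δ_{v_i}(g))_{d_i x}`. -/
noncomputable def bdry {L : AbsSimplicialComplex (WithBot V)}
    (hbp : ({⊥} : Finset (WithBot V)) ∈ L.faces)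
    (δ : WithBot V → (A →+ A)) (n : ℕ) :
    Cn A L hbp (n + 1) →+ Cn A L hbp n :=
  ∑ i : Fin (n + 2), ((-1 : ℤ) ^ (i : ℕ)) • dFace A hbp δ n i

/-- The contracting homotopy `Φ(g_{(v₀,…,v_n)}) = (δ_a⁻¹(g))_{(⊥,v₀,…,v_n)}`. -/
noncomputable def Phi {K : AbsSimplicialComplex V}
    {CK : AbsSimplicialComplex (WithBot V)} (hCK : CK.faces = coneFaces K)
    (hbp : ({⊥} : Finset (WithBot V)) ∈ CK.faces)
    (σa : A ≃+ A) (n : ℕ) : Cn A CK hbp n →+ Cn A CK hbp (n + 1) :=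
  DirectSum.toAddMonoid fun x => (embHom A (coneOn hCK x.1)).comp σa.symm.toAddMonoidHom

end ConeSC

namespace ConeSC

variable {V : Type u} [LinearOrder V]

lemma basept_face {L : AbsSimplicialComplex (WithBot V)}
    (hbp : ({⊥} : Finset (WithBot V)) ∈ L.faces) {n : ℕ} (i : Fin (n + 2)) :
    (basept L hbp (n + 1)).face i = basept L hbp n :=
  Subtype.ext rfl

lemma coneOn_basept {K : AbsSimplicialComplex V} {CK : AbsSimplicialComplex (WithBot V)}
    (hCK : CK.faces = coneFaces K) (hbp : ({⊥} : Finset (WithBot V)) ∈ CK.faces) (n : ℕ) :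
    coneOn hCK (basept CK hbp n) = basept CK hbp (n + 1) := by
  apply Subtype.ext
  funext j
  refine Fin.cases ?_ ?_ j <;> simp [coneOn, basept]

lemma coneOn_fst_zero {K : AbsSimplicialComplex V} {CK : AbsSimplicialComplex (WithBot V)}
    (hCK : CK.faces = coneFaces K) {n : ℕ} (x : SSimplex CK n) :
    (coneOn hCK x).1 0 = ⊥ := rfl

lemma coneOn_fst_succ {K : AbsSimplicialComplex V} {CK : AbsSimplicialComplex (WithBot V)}
    (hCK : CK.faces = coneFaces K) {n : ℕ} (x : SSimplex CK n) (i : Fin (n + 1)) :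
    (coneOn hCK x).1 i.succ = x.1 i := by
  simp [coneOn]

lemma coneOn_face_zero {K : AbsSimplicialComplex V} {CK : AbsSimplicialComplex (WithBot V)}
    (hCK : CK.faces = coneFaces K) {n : ℕ} (x : SSimplex CK n) :
    (coneOn hCK x).face 0 = x := by
  apply Subtype.ext
  funext j
  show (Fin.cons ⊥ x.1 : Fin (n + 2) → WithBot V) ((0 : Fin (n + 2)).succAbove j) = x.1 j
  rw [Fin.succAbove_zero]
  exact Fin.cons_succ _ _ _

lemma coneOn_face_succ {K : AbsSimplicialComplex V} {CK : AbsSimplicialComplex (WithBot V)}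
    (hCK : CK.faces = coneFaces K) {n : ℕ} (x : SSimplex CK (n + 1)) (i : Fin (n + 2)) :
    (coneOn hCK x).face i.succ = coneOn hCK (x.face i) := by
  apply Subtype.ext
  funext j
  show (Fin.cons ⊥ x.1 : Fin (n + 3) → WithBot V) (i.succ.succAbove j) =
    (Fin.cons ⊥ (x.1 ∘ i.succAbove) : Fin (n + 2) → WithBot V) j
  refine Fin.cases ?_ ?_ j
  · rw [Fin.succ_succAbove_zero, Fin.cons_zero, Fin.cons_zero]
  · intro k
    rw [Fin.succ_succAbove_succ, Fin.cons_succ, Fin.cons_succ]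
    rfl

lemma coneOn_face_one {K : AbsSimplicialComplex V} {CK : AbsSimplicialComplex (WithBot V)}
    (hCK : CK.faces = coneFaces K) (hbp : ({⊥} : Finset (WithBot V)) ∈ CK.faces)
    (x : SSimplex CK 0) :
    (coneOn hCK x).face 1 = basept CK hbp 0 := by
  apply Subtype.ext
  funext j
  have hj : j = 0 := Fin.fin_one_eq_zero j
  subst hj
  show (Fin.cons ⊥ x.1 : Fin 2 → WithBot V) ((1 : Fin 2).succAbove 0) = ⊥
  have h0 : (1 : Fin 2).succAbove 0 = 0 := by decide
  rw [h0, Fin.cons_zero]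

variable (A : Type u) [AddCommGroup A]

lemma embHom_basept {L : AbsSimplicialComplex (WithBot V)}
    (hbp : ({⊥} : Finset (WithBot V)) ∈ L.faces) (n : ℕ) :
    embHom A (basept L hbp n) = (0 : A →+ Cn A L hbp n) := dif_pos rfl

lemma embHom_of {L : AbsSimplicialComplex (WithBot V)}
    {hbp : ({⊥} : Finset (WithBot V)) ∈ L.faces} {n : ℕ}
    (x : { x : SSimplex L n // x ≠ basept L hbp n }) :
    embHom A x.1 = DirectSum.of (fun _ : { x : SSimplex L n // x ≠ basept L hbp n } => A) x := by
  rw [embHom, dif_neg x.2]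

lemma delta_symm_comm {K : AbsSimplicialComplex V} {CK : AbsSimplicialComplex (WithBot V)}
    (hCK : CK.faces = coneFaces K)
    (δ : WithBot V → (A →+ A))
    (hcomm : ∀ v w : WithBot V, ({v, w} : Finset (WithBot V)) ∈ CK.faces →
      (δ v).comp (δ w) = (δ w).comp (δ v))
    (σa : A ≃+ A) (hσa : σa.toAddMonoidHom = δ ⊥)
    {n : ℕ} (x : SSimplex CK n) (j : Fin (n + 1)) (g : A) :
    δ (x.1 j) (σa.symm g) = σa.symm (δ (x.1 j) g) := by
  have hmem : ({x.1 j, ⊥} : Finset (WithBot V)) ∈ CK.faces := by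
    refine CK.down_closed _ (coneOn hCK x).2.2 _ ?_ (Finset.insert_nonempty _ _)
    intro b hb
    simp only [Finset.mem_insert, Finset.mem_singleton] at hb
    rcases hb with rfl | rfl
    · exact Finset.mem_image.mpr ⟨j.succ, Finset.mem_univ _, coneOn_fst_succ hCK x j⟩
    · exact Finset.mem_image.mpr ⟨0, Finset.mem_univ _, coneOn_fst_zero hCK x⟩
  have h := hcomm (x.1 j) ⊥ hmem
  have h' : ∀ a, δ (x.1 j) (σa a) = σa (δ (x.1 j) a) := by
    intro a
    have := congrArg (fun f : A →+ A => f a) h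
    simpa [← hσa] using this
  apply σa.injective
  rw [AddEquiv.apply_symm_apply, ← h' (σa.symm g), AddEquiv.apply_symm_apply]

lemma Phi_embHom {K : AbsSimplicialComplex V} {CK : AbsSimplicialComplex (WithBot V)}
    (hCK : CK.faces = coneFaces K) (hbp : ({⊥} : Finset (WithBot V)) ∈ CK.faces)
    (σa : A ≃+ A) {n : ℕ} (x : SSimplex CK n) (g : A) :
    Phi A hCK hbp σa n (embHom A x g) = embHom A (coneOn hCK x) (σa.symm g) := by
  by_cases h : x = basept CK hbp n
  · subst h
    simp [embHom_basept, coneOn_basept hCK hbp n]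
  · have hx : embHom A x g =
        DirectSum.of (fun _ : { y : SSimplex CK n // y ≠ basept CK hbp n } => A) ⟨x, h⟩ g := by
      rw [embHom, dif_neg h]
    rw [hx, Phi, DirectSum.toAddMonoid_of]
    rfl

lemma dFace_embHom {L : AbsSimplicialComplex (WithBot V)}
    (hbp : ({⊥} : Finset (WithBot V)) ∈ L.faces)
    (δ : WithBot V → (A →+ A)) {n : ℕ} (i : Fin (n + 2)) (x : SSimplex L (n + 1)) (g : A) :
    dFace A hbp δ n i (embHom A x g) = embHom A (x.face i) (δ (x.1 i) g) := by
  by_cases h : x = basept L hbp (n + 1)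
  · subst h
    simp [embHom_basept, basept_face hbp i]
  · have hx : embHom A x g =
        DirectSum.of (fun _ : { y : SSimplex L (n + 1) // y ≠ basept L hbp (n + 1) } => A)
          ⟨x, h⟩ g := by
      rw [embHom, dif_neg h]
    rw [hx, dFace, DirectSum.toAddMonoid_of]
    rfl

lemma bdry_embHom {L : AbsSimplicialComplex (WithBot V)}
    (hbp : ({⊥} : Finset (WithBot V)) ∈ L.faces)
    (δ : WithBot V → (A →+ A)) {n : ℕ} (x : SSimplex L (n + 1)) (g : A) :
    bdry A hbp δ n (embHom A x g) =
      ∑ i : Fin (n + 2), ((-1 : ℤ) ^ (i : ℕ)) • embHom A (x.face i) (δ (x.1 i) g) := by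
  rw [bdry, AddMonoidHom.finset_sum_apply]
  refine Finset.sum_congr rfl fun i _ => ?_
  rw [AddMonoidHom.smul_apply, dFace_embHom]

lemma key_homotopy {K : AbsSimplicialComplex V} {CK : AbsSimplicialComplex (WithBot V)}
    (hCK : CK.faces = coneFaces K) (hbp : ({⊥} : Finset (WithBot V)) ∈ CK.faces)
    (δ : WithBot V → (A →+ A))
    (hcomm : ∀ v w : WithBot V, ({v, w} : Finset (WithBot V)) ∈ CK.faces →
      (δ v).comp (δ w) = (δ w).comp (δ v))
    (σa : A ≃+ A) (hσa : σa.toAddMonoidHom = δ ⊥)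
    (n : ℕ) (x : SSimplex CK (n + 1)) (g : A) :
    bdry A hbp δ (n + 1) (Phi A hCK hbp σa (n + 1) (embHom A x g)) +
      Phi A hCK hbp σa n (bdry A hbp δ n (embHom A x g)) = embHom A x g := by
  rw [Phi_embHom, bdry_embHom, bdry_embHom, map_sum, Fin.sum_univ_succ]
  rw [coneOn_face_zero hCK x, coneOn_fst_zero hCK x, ← hσa]
  simp only [AddEquiv.coe_toAddMonoidHom, AddEquiv.apply_symm_apply, Fin.val_zero, pow_zero,
    one_smul, map_zsmul, Phi_embHom]
  simp only [coneOn_face_succ hCK x, coneOn_fst_succ hCK x, Fin.val_succ, pow_succ,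
    ← delta_symm_comm A hCK δ hcomm σa hσa x]
  simp only [mul_neg_one, neg_smul, Finset.sum_neg_distrib]
  abel

lemma key_homotopy_zero {K : AbsSimplicialComplex V} {CK : AbsSimplicialComplex (WithBot V)}
    (hCK : CK.faces = coneFaces K) (hbp : ({⊥} : Finset (WithBot V)) ∈ CK.faces)
    (δ : WithBot V → (A →+ A))
    (σa : A ≃+ A) (hσa : σa.toAddMonoidHom = δ ⊥)
    (x : SSimplex CK 0) (g : A) :
    bdry A hbp δ 0 (Phi A hCK hbp σa 0 (embHom A x g)) = embHom A x g := by
  rw [Phi_embHom, bdry_embHom, Fin.sum_univ_two]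
  rw [coneOn_face_zero hCK x, coneOn_fst_zero hCK x, coneOn_face_one hCK hbp x,
    embHom_basept, ← hσa]
  simp

end ConeSC

open ConeSC in
/-- let `K` be an abstract simplicial complex on a linearly ordered vertex set
`V`, let `CK` be the cone on `K` with cone point the new smallest vertex `a = ⊥`, let `A` be
an abelian group and `δ` a regular extension of a twisted structure on `K`, i.e. a twisted
structure on `CK` with coefficients in `A` such that `δ_a` is an automorphism (witnessed by
`σa`).  Then the twisted chain complex of `CK` (with basepoint `a`) is contractible:
`Φ(g_{(v₀,…,v_n)}) = (δ_a⁻¹ g)_{(a,v₀,…,v_n)}` satisfies `∂_{n+1}Φ_n + Φ_{n−1}∂_n = id` for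
`n ≥ 1` and `∂_1 Φ_0 = id`, and hence `H_n(C_*, ∂_*) = 0` for all `n ≥ 0`. -/
theorem ConeSC.cone_chain_complex_contractible {V : Type u} [LinearOrder V]
    (K : AbsSimplicialComplex V) (CK : AbsSimplicialComplex (WithBot V))
    (hCK : CK.faces = coneFaces K)
    (hbp : ({⊥} : Finset (WithBot V)) ∈ CK.faces)
    (A : Type u) [AddCommGroup A]
    (δ : WithBot V → (A →+ A))
    (hcomm : ∀ v w : WithBot V, ({v, w} : Finset (WithBot V)) ∈ CK.faces →
      (δ v).comp (δ w) = (δ w).comp (δ v))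
    (σa : A ≃+ A) (hσa : σa.toAddMonoidHom = δ ⊥) :
    -- `∂_{n+1} ∘ Φ_n + Φ_{n−1} ∘ ∂_n = id` on `C_n` for `n ≥ 1`
    (∀ n : ℕ,
      (bdry A hbp δ (n + 1)).comp (Phi A hCK hbp σa (n + 1)) +
        (Phi A hCK hbp σa n).comp (bdry A hbp δ n) =
      AddMonoidHom.id (Cn A CK hbp (n + 1))) ∧
    -- `∂_1 ∘ Φ_0 = id` on `C_0`
    ((bdry A hbp δ 0).comp (Phi A hCK hbp σa 0) = AddMonoidHom.id (Cn A CK hbp 0)) ∧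
    -- `H_0 = 0`: the boundary `∂_1` is surjective
    Function.Surjective (bdry A hbp δ 0) ∧
    -- `H_{n+1} = 0`: every cycle is a boundary
    (∀ (n : ℕ) (x : Cn A CK hbp (n + 1)), bdry A hbp δ n x = 0 →
      x ∈ Set.range (bdry A hbp δ (n + 1))) := by
  have h1 : ∀ n : ℕ,
      (bdry A hbp δ (n + 1)).comp (Phi A hCK hbp σa (n + 1)) +
        (Phi A hCK hbp σa n).comp (bdry A hbp δ n) =
      AddMonoidHom.id (Cn A CK hbp (n + 1)) := by
    intro n
    refine DirectSum.addHom_ext fun x g => ?_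
    simp only [AddMonoidHom.add_apply, AddMonoidHom.comp_apply, AddMonoidHom.id_apply]
    rw [← embHom_of A x]
    exact key_homotopy A hCK hbp δ hcomm σa hσa n x.1 g
  have h2 : (bdry A hbp δ 0).comp (Phi A hCK hbp σa 0) = AddMonoidHom.id (Cn A CK hbp 0) := by
    refine DirectSum.addHom_ext fun x g => ?_
    simp only [AddMonoidHom.comp_apply, AddMonoidHom.id_apply]
    rw [← embHom_of A x]
    exact key_homotopy_zero A hCK hbp δ σa hσa x.1 g
  refine ⟨h1, h2, ?_, ?_⟩
  · intro y
    exact ⟨Phi A hCK hbp σa 0 y, DFunLike.congr_fun h2 y⟩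
  · intro n x hx
    refine ⟨Phi A hCK hbp σa (n + 1) x, ?_⟩
    have := DFunLike.congr_fun (h1 n) x
    simpa [hx] using this
end
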